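/- Let J, I ⊆ ℝ be open, h > 0, and k : J × I → ℝ be C¹. Define I^k : C¹([0,h],J) × C¹([-h,0],I) × (0,h) → ℝ by I^k(z,ψ,τ) = ∫_0^τ k(z(s),ψ(−s)) ds. Then I^k is continuously (Fréchet) differentiable, with derivative at (z,ψ,τ) acting on (u,χ,s) ∈ C¹([0,h],ℝ) × C¹([-h,0],ℝ) × ℝ by DI^k(z,ψ,τ)(u,χ,s) = ∫_0^τ ∂₁k(z(σ),ψ(−σ)) u(σ) dσ + ∫_0^τ ∂₂k(z(σ),ψ(−σ)) χ(−σ) dσ + k(z(τ),ψ(−τ)) s. -/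

import Mathlib

/-!
Put `γ σ = (z σ, ψ (-σ))`, so that `I^k(z, ψ, τ)` is the integral of `k` along the curve `γ`
from `0` to `τ`. Near the compact set `γ [0, h]` the derivative `Dk` is uniformly continuous,
which gives, uniformly in `σ`, the first-order Taylor estimate for `k` around `γ σ` (mean value
theorem) and the sup-norm continuity of `σ ↦ Dk (γ σ)`. Splitting `∫₀^τ' - ∫₀^τ` into `∫₀^τ` of
the difference plus `∫_τ^τ'`, the first piece is controlled by these uniform estimates and the
second by the continuity of `k ∘ γ` at `τ`. Only sup norms enter, and the C¹ norms dominate them.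
-/

open Set

noncomputable def supN {X : Type*} [NormedAddCommGroup X] (a b : ℝ) (f : ℝ → X) : ℝ :=
  ⨆ t : Set.Icc a b, ‖f t.1‖

def C1on {X : Type*} [NormedAddCommGroup X] [NormedSpace ℝ X] (a b : ℝ) (f : ℝ → X) : Prop :=
  ContinuousOn f (Set.Icc a b) ∧ (∀ t ∈ Set.Icc a b, DifferentiableWithinAt ℝ f (Set.Icc a b) t) ∧
    ContinuousOn (derivWithin f (Set.Icc a b)) (Set.Icc a b)

noncomputable def nC1 {X : Type*} [NormedAddCommGroup X] [NormedSpace ℝ X] (a b : ℝ) (f : ℝ → X) : ℝ :=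
  supN a b f + supN a b (derivWithin f (Set.Icc a b))

/-- Partial derivative in the first argument. -/
noncomputable def p1 (k : ℝ → ℝ → ℝ) (x y : ℝ) : ℝ := deriv (fun x' => k x' y) x

/-- Partial derivative in the second argument. -/
noncomputable def p2 (k : ℝ → ℝ → ℝ) (x y : ℝ) : ℝ := deriv (fun y' => k x y') y

/-- The functional I^k(z,ψ,τ) = ∫₀^τ k(z(s),ψ(-s)) ds. -/
noncomputable def Ik (k : ℝ → ℝ → ℝ) (z ψ : ℝ → ℝ) (τ : ℝ) : ℝ :=
  ∫ s in (0:ℝ)..τ, k (z s) (ψ (-s))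

/-- The candidate Fréchet derivative of I^k at (z,ψ,τ) applied to (u,χ,s). -/
noncomputable def DIk (k : ℝ → ℝ → ℝ) (z ψ : ℝ → ℝ) (τ : ℝ) (u χ : ℝ → ℝ) (s : ℝ) : ℝ :=
  (∫ σ in (0:ℝ)..τ, p1 k (z σ) (ψ (-σ)) * u σ) +
  (∫ σ in (0:ℝ)..τ, p2 k (z σ) (ψ (-σ)) * χ (-σ)) +
  k (z τ) (ψ (-τ)) * s

/-- Membership in the domain C¹([0,h],J) × C¹([-h,0],I) × (0,h). -/
def DomIk (J I : Set ℝ) (h : ℝ) (z ψ : ℝ → ℝ) (τ : ℝ) : Prop :=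
  C1on 0 h z ∧ (∀ u ∈ Set.Icc (0:ℝ) h, z u ∈ J) ∧
  C1on (-h) 0 ψ ∧ (∀ u ∈ Set.Icc (-h) 0, ψ u ∈ I) ∧ τ ∈ Set.Ioo (0:ℝ) h

open Metric

theorem IsCompact.exists_pos_forall_dist_le_of_continuousOn {X Y : Type*} [PseudoMetricSpace X]
    [PseudoMetricSpace Y] {K U : Set X} {g : X → Y} (hK : IsCompact K) (hU : IsOpen U)
    (hKU : K ⊆ U) (hg : ContinuousOn g U) {ε : ℝ} (hε : 0 < ε) :
    ∃ δ > 0, ∀ a ∈ K, ∀ b, dist b a ≤ δ → b ∈ U ∧ dist (g b) (g a) ≤ ε := by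
  obtain ⟨r, hr, hrU⟩ := hK.exists_thickening_subset_open hU hKU
  obtain ⟨η, hη, hgη⟩ := mem_uniformity_dist.1 <| hK.uniformContinuousAt_of_continuousAt g
    (fun a ha => hg.continuousAt (hU.mem_nhds (hKU ha))) (dist_mem_uniformity hε)
  refine ⟨min (r / 2) (η / 2), by positivity, fun a ha b hb => ⟨?_, ?_⟩⟩
  · exact hrU (mem_thickening_iff.2 ⟨a, ha, by linarith [min_le_left (r / 2) (η / 2)]⟩)
  · rw [dist_comm]
    exact (hgη (by rw [dist_comm]; linarith [min_le_right (r / 2) (η / 2)]) ha).le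

theorem exists_pos_forall_dist_comp_le {X Y Z : Type*} [PseudoMetricSpace X]
    [PseudoMetricSpace Y] [PseudoMetricSpace Z] {g : Y → Z} {c : X → Y} {s : Set X} {τ : X}
    (hg : ContinuousAt g (c τ)) (hc : ContinuousWithinAt c s τ) {ε : ℝ} (hε : 0 < ε) :
    ∃ δ > 0, ∀ σ ∈ s, ∀ p, dist p (c σ) ≤ δ → dist σ τ ≤ δ → dist (g p) (g (c τ)) ≤ ε := by
  obtain ⟨η, hη, hgη⟩ := continuousAt_iff.1 hg ε hε
  obtain ⟨η', hη', hcη'⟩ := continuousWithinAt_iff.1 hc (η / 2) (half_pos hη)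
  refine ⟨min (η / 2) (η' / 2), by positivity, fun σ hσ p hp hστ => (hgη ?_).le⟩
  calc dist p (c τ) ≤ dist p (c σ) + dist (c σ) (c τ) := dist_triangle _ _ _
    _ < η / 2 + η / 2 := add_lt_add_of_le_of_lt (hp.trans (min_le_left _ _))
        (hcη' hσ (hστ.trans_lt (by linarith [min_le_right (η / 2) (η' / 2)])))
    _ = η := add_halves η

theorem mem_Icc_and_dist_le_of_mem_uIoc {a b τ τ' σ : ℝ} (hτ : τ ∈ Icc a b)
    (hτ' : τ' ∈ Icc a b) (hσ : σ ∈ uIoc τ τ') : σ ∈ Icc a b ∧ dist σ τ ≤ |τ' - τ| :=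
  ⟨uIcc_subset_Icc hτ hτ' (uIoc_subset_uIcc hσ), abs_sub_left_of_mem_uIcc (uIoc_subset_uIcc hσ)⟩

section

variable {E F : Type*} [NormedAddCommGroup E] [NormedSpace ℝ E] [NormedAddCommGroup F]
  [NormedSpace ℝ F]

theorem IsCompact.exists_pos_forall_norm_sub_sub_fderiv_le {K U : Set E} {f : E → F}
    (hK : IsCompact K) (hU : IsOpen U) (hKU : K ⊆ U) (hf : ContDiffOn ℝ 1 f U) {ε : ℝ}
    (hε : 0 < ε) :
    ∃ δ > 0, ∀ a ∈ K, ∀ b, dist b a ≤ δ →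
      b ∈ U ∧ ‖f b - f a - fderiv ℝ f a (b - a)‖ ≤ ε * ‖b - a‖ := by
  obtain ⟨δ, hδ, H⟩ := hK.exists_pos_forall_dist_le_of_continuousOn hU hKU
    (hf.continuousOn_fderiv_of_isOpen hU le_rfl) hε
  have hball : ∀ a ∈ K, ∀ b ∈ closedBall a δ, b ∈ U ∧ ‖fderiv ℝ f b - fderiv ℝ f a‖ ≤ ε :=
    fun a ha b hb => by simpa only [← dist_eq_norm] using H a ha b hb
  refine ⟨δ, hδ, fun a ha b hb => ⟨(hball a ha b hb).1, ?_⟩⟩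
  refine (convex_closedBall a δ).norm_image_sub_le_of_norm_hasFDerivWithin_le' (fun x hx => ?_)
    (fun x hx => (hball a ha x hx).2) (mem_closedBall_self hδ.le) hb
  exact ((hf.differentiableOn one_ne_zero x (hball a ha x hx).1).differentiableAt
    (hU.mem_nhds (hball a ha x hx).1)).hasFDerivAt.hasFDerivWithinAt

noncomputable def integralAlong (f : E → F) (c : ℝ → E) (a τ : ℝ) : F :=
  ∫ σ in a..τ, f (c σ)

noncomputable def integralAlongFDeriv (f : E → F) (c : ℝ → E) (a τ : ℝ) (v : ℝ → E) (s : ℝ) :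
    F :=
  (∫ σ in a..τ, fderiv ℝ f (c σ) (v σ)) + s • f (c τ)

omit [NormedSpace ℝ F] in
theorem ContinuousOn.intervalIntegrable_of_mem_Icc {g : ℝ → F} {a b x y : ℝ}
    (hg : ContinuousOn g (Icc a b)) (hx : x ∈ Icc a b) (hy : y ∈ Icc a b) :
    IntervalIntegrable g MeasureTheory.volume x y :=
  (hg.mono (uIcc_subset_Icc hx hy)).intervalIntegrable

theorem integral_sub_integral_of_continuousOn {g g' : ℝ → F} {a b τ τ' : ℝ}
    (hg : ContinuousOn g (Icc a b)) (hg' : ContinuousOn g' (Icc a b)) (hτ : τ ∈ Icc a b)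
    (hτ' : τ' ∈ Icc a b) :
    (∫ σ in a..τ', g' σ) - ∫ σ in a..τ, g σ =
      (∫ σ in a..τ, (g' σ - g σ)) + ∫ σ in τ..τ', g' σ := by
  have ha : a ∈ Icc a b := left_mem_Icc.2 (hτ.1.trans hτ.2)
  rw [intervalIntegral.integral_sub (hg'.intervalIntegrable_of_mem_Icc ha hτ)
      (hg.intervalIntegrable_of_mem_Icc ha hτ),
    ← intervalIntegral.integral_interval_sub_left (hg'.intervalIntegrable_of_mem_Icc ha hτ')
      (hg'.intervalIntegrable_of_mem_Icc ha hτ)]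
  abel

theorem norm_integral_clm_apply_le {A : ℝ → E →L[ℝ] F} {v : ℝ → E} {τ τ' C μ : ℝ}
    (hA : ∀ σ ∈ uIoc τ τ', ‖A σ‖ ≤ C) (hv : ∀ σ ∈ uIoc τ τ', ‖v σ‖ ≤ μ) (hC : 0 ≤ C) :
    ‖∫ σ in τ..τ', A σ (v σ)‖ ≤ C * μ * |τ' - τ| :=
  intervalIntegral.norm_integral_le_of_norm_le_const fun σ hσ =>
    ((A σ).le_opNorm (v σ)).trans (mul_le_mul (hA σ hσ) (hv σ hσ) (norm_nonneg _) hC)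

variable {f : E → F} {U : Set E} {c c' : ℝ → E} {a b τ τ' : ℝ}

theorem integralAlong_sub_sub_integralAlongFDeriv [CompleteSpace F] (hf : ContinuousOn f U)
    (hf' : ContinuousOn (fderiv ℝ f) U) (hc : ContinuousOn c (Icc a b))
    (hcU : MapsTo c (Icc a b) U) (hc' : ContinuousOn c' (Icc a b))
    (hc'U : MapsTo c' (Icc a b) U) (hτ : τ ∈ Icc a b) (hτ' : τ' ∈ Icc a b) :
    integralAlong f c' a τ' - integralAlong f c a τ -
        integralAlongFDeriv f c a τ (c' - c) (τ' - τ) =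
      (∫ σ in a..τ, (f (c' σ) - f (c σ) - fderiv ℝ f (c σ) (c' σ - c σ))) +
        ∫ σ in τ..τ', (f (c' σ) - f (c τ)) := by
  have ha : a ∈ Icc a b := left_mem_Icc.2 (hτ.1.trans hτ.2)
  have hfc : ContinuousOn (fun σ => f (c σ)) (Icc a b) := hf.comp hc hcU
  have hfc' : ContinuousOn (fun σ => f (c' σ)) (Icc a b) := hf.comp hc' hc'U
  have hfd : ContinuousOn (fun σ => f (c' σ) - f (c σ)) (Icc a b) := hfc'.sub hfc
  have hDc : ContinuousOn (fun σ => fderiv ℝ f (c σ) (c' σ - c σ)) (Icc a b) :=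
    (hf'.comp hc hcU).clm_apply (hc'.sub hc)
  have key := integral_sub_integral_of_continuousOn hfc hfc' hτ hτ'
  rw [intervalIntegral.integral_sub (hfd.intervalIntegrable_of_mem_Icc ha hτ)
      (hDc.intervalIntegrable_of_mem_Icc ha hτ),
    intervalIntegral.integral_sub (hfc'.intervalIntegrable_of_mem_Icc hτ hτ')
      intervalIntegrable_const, intervalIntegral.integral_const]
  simp only [integralAlong, integralAlongFDeriv, Pi.sub_apply]
  rw [key]
  abel

theorem integralAlongFDeriv_sub_integralAlongFDeriv (hf' : ContinuousOn (fderiv ℝ f) U)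
    (hc : ContinuousOn c (Icc a b)) (hcU : MapsTo c (Icc a b) U)
    (hc' : ContinuousOn c' (Icc a b)) (hc'U : MapsTo c' (Icc a b) U) (hτ : τ ∈ Icc a b)
    (hτ' : τ' ∈ Icc a b) {v : ℝ → E} (hv : ContinuousOn v (Icc a b)) (s : ℝ) :
    integralAlongFDeriv f c' a τ' v s - integralAlongFDeriv f c a τ v s =
      (∫ σ in a..τ, (fderiv ℝ f (c' σ) - fderiv ℝ f (c σ)) (v σ)) +
        (∫ σ in τ..τ', fderiv ℝ f (c' σ) (v σ)) + s • (f (c' τ') - f (c τ)) := by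
  have key := integral_sub_integral_of_continuousOn ((hf'.comp hc hcU).clm_apply hv)
    ((hf'.comp hc' hc'U).clm_apply hv) hτ hτ'
  simp only [integralAlongFDeriv, sub_apply, smul_sub, Function.comp_apply] at key ⊢
  rw [← key]
  abel

theorem exists_norm_integralAlong_sub_sub_le [CompleteSpace F] (hU : IsOpen U)
    (hf : ContDiffOn ℝ 1 f U) (hc : ContinuousOn c (Icc a b)) (hcU : MapsTo c (Icc a b) U)
    (hτ : τ ∈ Icc a b) {ε : ℝ} (hε : 0 < ε) :
    ∃ δ > 0, ∀ (c' : ℝ → E) (τ' η : ℝ), ContinuousOn c' (Icc a b) → τ' ∈ Icc a b →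
      (∀ σ ∈ Icc a b, ‖c' σ - c σ‖ ≤ η) → η ≤ δ → |τ' - τ| ≤ δ →
      ‖integralAlong f c' a τ' - integralAlong f c a τ -
          integralAlongFDeriv f c a τ (c' - c) (τ' - τ)‖ ≤ ε * (η + |τ' - τ|) := by
  obtain ⟨ε', hε', hε'τ⟩ := exists_pos_mul_lt hε |τ - a|
  have hK := isCompact_Icc.image_of_continuousOn hc
  obtain ⟨δ₁, hδ₁, taylor⟩ :=
    hK.exists_pos_forall_norm_sub_sub_fderiv_le hU (image_subset_iff.2 hcU) hf hε'
  obtain ⟨δ₂, hδ₂, nearτ⟩ := exists_pos_forall_dist_comp_le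
    (hf.continuousOn.continuousAt (hU.mem_nhds (hcU hτ))) (hc τ hτ) hε
  refine ⟨min δ₁ δ₂, by positivity, fun c' τ' η hc' hτ' hη hηδ hτδ => ?_⟩
  have hdist : ∀ σ ∈ Icc a b, dist (c' σ) (c σ) ≤ min δ₁ δ₂ := fun σ hσ =>
    (dist_eq_norm (c' σ) (c σ)).trans_le ((hη σ hσ).trans hηδ)
  have taylor' := fun σ (hσ : σ ∈ Icc a b) =>
    taylor _ (mem_image_of_mem c hσ) _ ((hdist σ hσ).trans (min_le_left _ _))
  have hη0 : 0 ≤ η := (norm_nonneg _).trans (hη τ hτ)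
  have h₁ : ‖∫ σ in a..τ, (f (c' σ) - f (c σ) - fderiv ℝ f (c σ) (c' σ - c σ))‖ ≤
      ε' * η * |τ - a| := by
    refine intervalIntegral.norm_integral_le_of_norm_le_const fun σ hσ => ?_
    have hσI := (mem_Icc_and_dist_le_of_mem_uIoc (left_mem_Icc.2 (hτ.1.trans hτ.2)) hτ hσ).1
    exact (taylor' σ hσI).2.trans (mul_le_mul_of_nonneg_left (hη σ hσI) hε'.le)
  have h₂ : ‖∫ σ in τ..τ', (f (c' σ) - f (c τ))‖ ≤ ε * |τ' - τ| := by
    refine intervalIntegral.norm_integral_le_of_norm_le_const fun σ hσ => ?_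
    obtain ⟨hσI, hστ⟩ := mem_Icc_and_dist_le_of_mem_uIoc hτ hτ' hσ
    rw [← dist_eq_norm]
    exact nearτ σ hσI _ ((hdist σ hσI).trans (min_le_right _ _))
      (hστ.trans (hτδ.trans (min_le_right _ _)))
  rw [integralAlong_sub_sub_integralAlongFDeriv hf.continuousOn
    (hf.continuousOn_fderiv_of_isOpen hU le_rfl) hc hcU hc' (fun σ hσ => (taylor' σ hσ).1) hτ hτ']
  calc _ ≤ ε' * η * |τ - a| + ε * |τ' - τ| := norm_add_le_of_le h₁ h₂
    _ = η * (|τ - a| * ε') + ε * |τ' - τ| := by ring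
    _ ≤ η * ε + ε * |τ' - τ| := by gcongr
    _ = ε * (η + |τ' - τ|) := by ring

theorem exists_norm_integralAlongFDeriv_sub_le (hU : IsOpen U) (hf : ContDiffOn ℝ 1 f U)
    (hc : ContinuousOn c (Icc a b)) (hcU : MapsTo c (Icc a b) U) (hτ : τ ∈ Icc a b) {ε : ℝ}
    (hε : 0 < ε) :
    ∃ δ > 0, ∀ (c' : ℝ → E) (τ' : ℝ), ContinuousOn c' (Icc a b) → τ' ∈ Icc a b →
      (∀ σ ∈ Icc a b, ‖c' σ - c σ‖ ≤ δ) → |τ' - τ| ≤ δ →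
      ∀ (v : ℝ → E) (s μ : ℝ), ContinuousOn v (Icc a b) → (∀ σ ∈ Icc a b, ‖v σ‖ ≤ μ) →
      ‖integralAlongFDeriv f c' a τ' v s - integralAlongFDeriv f c a τ v s‖ ≤
        ε * (μ + |s|) := by
  have hf' := hf.continuousOn_fderiv_of_isOpen hU le_rfl
  obtain ⟨ε', hε', hε'τ⟩ := exists_pos_mul_lt (half_pos hε) |τ - a|
  set C := ‖fderiv ℝ f (c τ)‖ + 1
  have hC : 0 < C := by positivity
  have hK := isCompact_Icc.image_of_continuousOn hc
  obtain ⟨δ₁, hδ₁, near⟩ :=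
    hK.exists_pos_forall_dist_le_of_continuousOn hU (image_subset_iff.2 hcU) hf' hε'
  obtain ⟨δ₂, hδ₂, nearτ⟩ := exists_pos_forall_dist_comp_le
    (hf.continuousOn.continuousAt (hU.mem_nhds (hcU hτ))) (hc τ hτ) hε
  obtain ⟨δ₃, hδ₃, nearτ'⟩ := exists_pos_forall_dist_comp_le
    (hf'.continuousAt (hU.mem_nhds (hcU hτ))) (hc τ hτ) one_pos
  obtain ⟨δ, hδ, hδ₁', hδ₂', hδ₃', hδC⟩ :
      ∃ δ > 0, δ ≤ δ₁ ∧ δ ≤ δ₂ ∧ δ ≤ δ₃ ∧ δ ≤ ε / (2 * C) :=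
    ⟨min (min δ₁ δ₂) (min δ₃ (ε / (2 * C))), by positivity,
      (min_le_left _ _).trans (min_le_left _ _), (min_le_left _ _).trans (min_le_right _ _),
      (min_le_right _ _).trans (min_le_left _ _), (min_le_right _ _).trans (min_le_right _ _)⟩
  refine ⟨δ, hδ, fun c' τ' hc' hτ' hc'δ hτδ v s μ hv hvμ => ?_⟩
  have hdist : ∀ σ ∈ Icc a b, dist (c' σ) (c σ) ≤ δ :=
    fun σ hσ => (dist_eq_norm (c' σ) (c σ)).trans_le (hc'δ σ hσ)
  have near' := fun σ (hσ : σ ∈ Icc a b) =>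
    near _ (mem_image_of_mem c hσ) _ ((hdist σ hσ).trans hδ₁')
  have hμ : 0 ≤ μ := (norm_nonneg _).trans (hvμ τ hτ)
  have ha : a ∈ Icc a b := left_mem_Icc.2 (hτ.1.trans hτ.2)
  have h₁ : ‖∫ σ in a..τ, (fderiv ℝ f (c' σ) - fderiv ℝ f (c σ)) (v σ)‖ ≤
      ε' * μ * |τ - a| := by
    refine norm_integral_clm_apply_le (fun σ hσ => ?_)
      (fun σ hσ => hvμ σ (mem_Icc_and_dist_le_of_mem_uIoc ha hτ hσ).1) hε'.le
    rw [← dist_eq_norm]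
    exact (near' σ (mem_Icc_and_dist_le_of_mem_uIoc ha hτ hσ).1).2
  have h₂ : ‖∫ σ in τ..τ', fderiv ℝ f (c' σ) (v σ)‖ ≤ C * μ * |τ' - τ| := by
    refine norm_integral_clm_apply_le (fun σ hσ => ?_)
      (fun σ hσ => hvμ σ (mem_Icc_and_dist_le_of_mem_uIoc hτ hτ' hσ).1) hC.le
    obtain ⟨hσI, hστ⟩ := mem_Icc_and_dist_le_of_mem_uIoc hτ hτ' hσ
    have hD := nearτ' σ hσI _ ((hdist σ hσI).trans hδ₃') ((hστ.trans hτδ).trans hδ₃')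
    rw [dist_eq_norm] at hD
    linarith [norm_le_norm_add_norm_sub' (fderiv ℝ f (c' σ)) (fderiv ℝ f (c τ))]
  have h₃ : ‖s • (f (c' τ') - f (c τ))‖ ≤ |s| * ε := by
    rw [norm_smul, Real.norm_eq_abs, ← dist_eq_norm]
    exact mul_le_mul_of_nonneg_left (nearτ τ' hτ' _ ((hdist τ' hτ').trans hδ₂')
      (hτδ.trans hδ₂')) (abs_nonneg s)
  have hCτ : C * |τ' - τ| ≤ ε / 2 := by
    calc C * |τ' - τ| ≤ C * (ε / (2 * C)) := by gcongr; exact hτδ.trans hδC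
      _ = ε / 2 := by field_simp
  rw [integralAlongFDeriv_sub_integralAlongFDeriv hf' hc hcU hc'
    (fun σ hσ => (near' σ hσ).1) hτ hτ' hv]
  calc _ ≤ ε' * μ * |τ - a| + C * μ * |τ' - τ| + |s| * ε :=
        norm_add₃_le.trans (add_le_add_three h₁ h₂ h₃)
    _ = μ * (|τ - a| * ε') + μ * (C * |τ' - τ|) + |s| * ε := by ring
    _ ≤ μ * (ε / 2) + μ * (ε / 2) + |s| * ε := by gcongr
    _ = ε * (μ + |s|) := by ring

end

theorem supN_nonneg (a b : ℝ) (f : ℝ → ℝ) : 0 ≤ supN a b f :=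
  Real.iSup_nonneg fun _ => norm_nonneg _

theorem supN_le_nC1 (a b : ℝ) (f : ℝ → ℝ) : supN a b f ≤ nC1 a b f :=
  le_add_of_nonneg_right (supN_nonneg _ _ _)

theorem max_supN_le_of_nC1_le {a b c d δ : ℝ} {f g : ℝ → ℝ} (hf : nC1 a b f ≤ δ)
    (hg : nC1 c d g ≤ δ) : max (supN a b f) (supN c d g) ≤ δ :=
  max_le ((supN_le_nC1 _ _ _).trans hf) ((supN_le_nC1 _ _ _).trans hg)

theorem max_supN_le_nC1_add (a b c d : ℝ) (f g : ℝ → ℝ) :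
    max (supN a b f) (supN c d g) ≤ nC1 a b f + nC1 c d g :=
  (max_le_add_of_nonneg (supN_nonneg _ _ _) (supN_nonneg _ _ _)).trans
    (add_le_add (supN_le_nC1 _ _ _) (supN_le_nC1 _ _ _))

theorem norm_le_supN {X : Type*} [NormedAddCommGroup X] {a b : ℝ} {f : ℝ → X}
    (hf : ContinuousOn f (Icc a b)) {t : ℝ} (ht : t ∈ Icc a b) : ‖f t‖ ≤ supN a b f := by
  obtain ⟨C, hC⟩ := isCompact_Icc.exists_bound_of_continuousOn hf
  exact le_ciSup ⟨C, by rintro y ⟨t', rfl⟩; exact hC t'.1 t'.2⟩ (⟨t, ht⟩ : Icc a b)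

def reflectedPair (z ψ : ℝ → ℝ) (σ : ℝ) : ℝ × ℝ := (z σ, ψ (-σ))

theorem neg_mem_Icc_neg {h σ : ℝ} (hσ : σ ∈ Icc (0 : ℝ) h) : -σ ∈ Icc (-h) 0 :=
  ⟨neg_le_neg hσ.2, neg_nonpos.2 hσ.1⟩

theorem reflectedPair_sub (z ψ z' ψ' : ℝ → ℝ) :
    reflectedPair z' ψ' - reflectedPair z ψ = reflectedPair (z' - z) (ψ' - ψ) := rfl

theorem ContinuousOn.reflectedPair {h : ℝ} {z ψ : ℝ → ℝ} (hz : ContinuousOn z (Icc 0 h))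
    (hψ : ContinuousOn ψ (Icc (-h) 0)) : ContinuousOn (reflectedPair z ψ) (Icc 0 h) :=
  hz.prodMk (hψ.comp continuous_neg.continuousOn fun _ => neg_mem_Icc_neg)

theorem mapsTo_reflectedPair {J I : Set ℝ} {h : ℝ} {z ψ : ℝ → ℝ}
    (hzJ : ∀ u ∈ Icc (0 : ℝ) h, z u ∈ J) (hψI : ∀ u ∈ Icc (-h) (0 : ℝ), ψ u ∈ I) :
    MapsTo (reflectedPair z ψ) (Icc 0 h) (J ×ˢ I) :=
  fun _ hσ => ⟨hzJ _ hσ, hψI _ (neg_mem_Icc_neg hσ)⟩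

theorem norm_reflectedPair_le {h σ : ℝ} {z ψ : ℝ → ℝ} (hz : ContinuousOn z (Icc 0 h))
    (hψ : ContinuousOn ψ (Icc (-h) 0)) (hσ : σ ∈ Icc 0 h) :
    ‖reflectedPair z ψ σ‖ ≤ max (supN 0 h z) (supN (-h) 0 ψ) :=
  max_le_max (norm_le_supN hz hσ) (norm_le_supN hψ (neg_mem_Icc_neg hσ))

theorem p1_eq_fderiv_apply {k : ℝ → ℝ → ℝ} {x y : ℝ}
    (hk : DifferentiableAt ℝ (Function.uncurry k) (x, y)) :
    p1 k x y = fderiv ℝ (Function.uncurry k) (x, y) (1, 0) := by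
  have hline : HasDerivAt (fun x' => (x', y)) ((1 : ℝ), (0 : ℝ)) x :=
    (hasDerivAt_id x).prodMk (hasDerivAt_const x y)
  exact (hk.hasFDerivAt.comp_hasDerivAt x hline).deriv

theorem p2_eq_fderiv_apply {k : ℝ → ℝ → ℝ} {x y : ℝ}
    (hk : DifferentiableAt ℝ (Function.uncurry k) (x, y)) :
    p2 k x y = fderiv ℝ (Function.uncurry k) (x, y) (0, 1) := by
  have hline : HasDerivAt (fun y' => (x, y')) ((0 : ℝ), (1 : ℝ)) y :=
    (hasDerivAt_const y x).prodMk (hasDerivAt_id y)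
  exact (hk.hasFDerivAt.comp_hasDerivAt y hline).deriv

theorem fderiv_apply_eq_p1_mul_add_p2_mul {k : ℝ → ℝ → ℝ} {x y : ℝ}
    (hk : DifferentiableAt ℝ (Function.uncurry k) (x, y)) (v w : ℝ) :
    fderiv ℝ (Function.uncurry k) (x, y) (v, w) = p1 k x y * v + p2 k x y * w := by
  have hvw : ((v, w) : ℝ × ℝ) = v • ((1 : ℝ), (0 : ℝ)) + w • ((0 : ℝ), (1 : ℝ)) := by simp
  rw [hvw, map_add, map_smul, map_smul, smul_eq_mul, smul_eq_mul, p1_eq_fderiv_apply hk,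
    p2_eq_fderiv_apply hk, mul_comm v, mul_comm w]

theorem Ik_eq_integralAlong (k : ℝ → ℝ → ℝ) (z ψ : ℝ → ℝ) (τ : ℝ) :
    Ik k z ψ τ = integralAlong (Function.uncurry k) (reflectedPair z ψ) 0 τ := rfl

theorem DIk_eq_integralAlongFDeriv {U : Set (ℝ × ℝ)} {k : ℝ → ℝ → ℝ} (hU : IsOpen U)
    (hk : ContDiffOn ℝ 1 (Function.uncurry k) U) {h τ : ℝ} {z ψ u χ : ℝ → ℝ}
    (hz : ContinuousOn z (Icc 0 h)) (hψ : ContinuousOn ψ (Icc (-h) 0))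
    (hγU : MapsTo (reflectedPair z ψ) (Icc 0 h) U) (hτ : τ ∈ Icc 0 h)
    (hu : ContinuousOn u (Icc 0 h)) (hχ : ContinuousOn χ (Icc (-h) 0)) (s : ℝ) :
    DIk k z ψ τ u χ s =
      integralAlongFDeriv (Function.uncurry k) (reflectedPair z ψ) 0 τ (reflectedPair u χ) s := by
  have hdiff : ∀ σ ∈ Icc 0 h, DifferentiableAt ℝ (Function.uncurry k) (reflectedPair z ψ σ) :=
    fun σ hσ => (hk.differentiableOn one_ne_zero _ (hγU hσ)).differentiableAt
      (hU.mem_nhds (hγU hσ))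
  have hD : ContinuousOn (fun σ => fderiv ℝ (Function.uncurry k) (reflectedPair z ψ σ))
      (Icc 0 h) :=
    (hk.continuousOn_fderiv_of_isOpen hU le_rfl).comp (hz.reflectedPair hψ) hγU
  have hχ' : ContinuousOn (fun σ => χ (-σ)) (Icc 0 h) :=
    hχ.comp continuous_neg.continuousOn fun _ => neg_mem_Icc_neg
  have h₁ : ContinuousOn (fun σ => p1 k (z σ) (ψ (-σ)) * u σ) (Icc 0 h) :=
    ((hD.clm_apply continuousOn_const).mul hu).congr fun σ hσ => by
      rw [p1_eq_fderiv_apply (hdiff σ hσ)]; rfl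
  have h₂ : ContinuousOn (fun σ => p2 k (z σ) (ψ (-σ)) * χ (-σ)) (Icc 0 h) :=
    ((hD.clm_apply continuousOn_const).mul hχ').congr fun σ hσ => by
      rw [p2_eq_fderiv_apply (hdiff σ hσ)]; rfl
  have h0 : (0 : ℝ) ∈ Icc 0 h := left_mem_Icc.2 (hτ.1.trans hτ.2)
  rw [DIk, integralAlongFDeriv, ← intervalIntegral.integral_add
    (h₁.intervalIntegrable_of_mem_Icc h0 hτ) (h₂.intervalIntegrable_of_mem_Icc h0 hτ),
    smul_eq_mul, mul_comm s]
  congr 1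
  refine intervalIntegral.integral_congr fun σ hσ => ?_
  exact (fderiv_apply_eq_p1_mul_add_p2_mul (hdiff σ (uIcc_subset_Icc h0 hτ hσ)) _ _).symm

theorem exists_abs_Ik_sub_sub_DIk_le {J I : Set ℝ} (hJ : IsOpen J) (hI : IsOpen I) {h : ℝ}
    {k : ℝ → ℝ → ℝ} (hk : ContDiffOn ℝ 1 (Function.uncurry k) (J ×ˢ I)) {z ψ : ℝ → ℝ} {τ : ℝ}
    (hdom : DomIk J I h z ψ τ) {ε : ℝ} (hε : 0 < ε) :
    ∃ δ > 0, ∀ z' ψ' : ℝ → ℝ, ∀ τ' : ℝ, DomIk J I h z' ψ' τ' →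
      nC1 0 h (z' - z) ≤ δ → nC1 (-h) 0 (ψ' - ψ) ≤ δ → |τ' - τ| ≤ δ →
      |Ik k z' ψ' τ' - Ik k z ψ τ - DIk k z ψ τ (z' - z) (ψ' - ψ) (τ' - τ)| ≤
        ε * (nC1 0 h (z' - z) + nC1 (-h) 0 (ψ' - ψ) + |τ' - τ|) := by
  obtain ⟨hz, hzJ, hψ, hψI, hτ⟩ := hdom
  have hγU := mapsTo_reflectedPair hzJ hψI
  obtain ⟨δ, hδ, H⟩ := exists_norm_integralAlong_sub_sub_le (hJ.prod hI) hk
    (hz.1.reflectedPair hψ.1) hγU (Ioo_subset_Icc_self hτ) hε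
  refine ⟨δ, hδ, fun z' ψ' τ' hdom' hzδ hψδ hτδ => ?_⟩
  obtain ⟨hz', -, hψ', -, hτ'⟩ := hdom'
  have hdz := hz'.1.sub hz.1
  have hdψ := hψ'.1.sub hψ.1
  have key := H (reflectedPair z' ψ') τ' _ (hz'.1.reflectedPair hψ'.1) (Ioo_subset_Icc_self hτ')
    (fun σ hσ => norm_reflectedPair_le hdz hdψ hσ) (max_supN_le_of_nC1_le hzδ hψδ) hτδ
  rw [reflectedPair_sub, ← DIk_eq_integralAlongFDeriv (hJ.prod hI) hk hz.1 hψ.1 hγU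
    (Ioo_subset_Icc_self hτ) hdz hdψ, ← Ik_eq_integralAlong, ← Ik_eq_integralAlong,
    Real.norm_eq_abs] at key
  exact key.trans (by gcongr; exact max_supN_le_nC1_add _ _ _ _ _ _)

theorem exists_abs_DIk_sub_le {J I : Set ℝ} (hJ : IsOpen J) (hI : IsOpen I) {h : ℝ}
    {k : ℝ → ℝ → ℝ} (hk : ContDiffOn ℝ 1 (Function.uncurry k) (J ×ˢ I)) {z ψ : ℝ → ℝ} {τ : ℝ}
    (hdom : DomIk J I h z ψ τ) {ε : ℝ} (hε : 0 < ε) :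
    ∃ δ > 0, ∀ z' ψ' : ℝ → ℝ, ∀ τ' : ℝ, DomIk J I h z' ψ' τ' →
      nC1 0 h (z' - z) ≤ δ → nC1 (-h) 0 (ψ' - ψ) ≤ δ → |τ' - τ| ≤ δ →
      ∀ u χ : ℝ → ℝ, ∀ s : ℝ, C1on 0 h u → C1on (-h) 0 χ →
        |DIk k z' ψ' τ' u χ s - DIk k z ψ τ u χ s| ≤ ε * (nC1 0 h u + nC1 (-h) 0 χ + |s|) := by
  obtain ⟨hz, hzJ, hψ, hψI, hτ⟩ := hdom
  have hγU := mapsTo_reflectedPair hzJ hψI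
  obtain ⟨δ, hδ, H⟩ := exists_norm_integralAlongFDeriv_sub_le (hJ.prod hI) hk
    (hz.1.reflectedPair hψ.1) hγU (Ioo_subset_Icc_self hτ) hε
  refine ⟨δ, hδ, fun z' ψ' τ' hdom' hzδ hψδ hτδ u χ s hu hχ => ?_⟩
  obtain ⟨hz', hz'J, hψ', hψ'I, hτ'⟩ := hdom'
  have key := H (reflectedPair z' ψ') τ' (hz'.1.reflectedPair hψ'.1) (Ioo_subset_Icc_self hτ')
    (fun σ hσ => (norm_reflectedPair_le (hz'.1.sub hz.1) (hψ'.1.sub hψ.1) hσ).trans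
      (max_supN_le_of_nC1_le hzδ hψδ)) hτδ
    (reflectedPair u χ) s _ (hu.1.reflectedPair hχ.1)
    (fun σ hσ => norm_reflectedPair_le hu.1 hχ.1 hσ)
  rw [← DIk_eq_integralAlongFDeriv (hJ.prod hI) hk hz'.1 hψ'.1 (mapsTo_reflectedPair hz'J hψ'I)
      (Ioo_subset_Icc_self hτ') hu.1 hχ.1,
    ← DIk_eq_integralAlongFDeriv (hJ.prod hI) hk hz.1 hψ.1 hγU (Ioo_subset_Icc_self hτ) hu.1
      hχ.1,
    Real.norm_eq_abs] at key
  exact key.trans (by gcongr; exact max_supN_le_nC1_add _ _ _ _ _ _)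

theorem stmt10_general (J I : Set ℝ) (hJ : IsOpen J) (hI : IsOpen I) (h : ℝ)
    (k : ℝ → ℝ → ℝ) (hk : ContDiffOn ℝ 1 (fun p : ℝ × ℝ => k p.1 p.2) (J ×ˢ I)) :
    (∀ z ψ : ℝ → ℝ, ∀ τ : ℝ, DomIk J I h z ψ τ →
      ∀ ε > 0, ∃ δ > 0, ∀ z' ψ' : ℝ → ℝ, ∀ τ' : ℝ, DomIk J I h z' ψ' τ' →
        nC1 0 h (z' - z) ≤ δ → nC1 (-h) 0 (ψ' - ψ) ≤ δ → |τ' - τ| ≤ δ →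
        |Ik k z' ψ' τ' - Ik k z ψ τ - DIk k z ψ τ (z' - z) (ψ' - ψ) (τ' - τ)| ≤
          ε * (nC1 0 h (z' - z) + nC1 (-h) 0 (ψ' - ψ) + |τ' - τ|)) ∧
    (∀ z ψ : ℝ → ℝ, ∀ τ : ℝ, DomIk J I h z ψ τ →
      ∀ ε > 0, ∃ δ > 0, ∀ z' ψ' : ℝ → ℝ, ∀ τ' : ℝ, DomIk J I h z' ψ' τ' →
        nC1 0 h (z' - z) ≤ δ → nC1 (-h) 0 (ψ' - ψ) ≤ δ → |τ' - τ| ≤ δ →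
        ∀ u χ : ℝ → ℝ, ∀ s : ℝ, C1on 0 h u → C1on (-h) 0 χ →
          |DIk k z' ψ' τ' u χ s - DIk k z ψ τ u χ s| ≤
            ε * (nC1 0 h u + nC1 (-h) 0 χ + |s|)) :=
  ⟨fun _ _ _ hdom _ hε => exists_abs_Ik_sub_sub_DIk_le hJ hI hk hdom hε,
    fun _ _ _ hdom _ hε => exists_abs_DIk_sub_le hJ hI hk hdom hε⟩

/-- I^k is continuously Fréchet differentiable with the stated derivative. -/
theorem stmt10 (J I : Set ℝ) (hJ : IsOpen J) (hI : IsOpen I) (h : ℝ) (hh : 0 < h)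
    (k : ℝ → ℝ → ℝ) (hk : ContDiffOn ℝ 1 (fun p : ℝ × ℝ => k p.1 p.2) (J ×ˢ I)) :
    (∀ z ψ : ℝ → ℝ, ∀ τ : ℝ, DomIk J I h z ψ τ →
      ∀ ε > 0, ∃ δ > 0, ∀ z' ψ' : ℝ → ℝ, ∀ τ' : ℝ, DomIk J I h z' ψ' τ' →
        nC1 0 h (z' - z) ≤ δ → nC1 (-h) 0 (ψ' - ψ) ≤ δ → |τ' - τ| ≤ δ →
        |Ik k z' ψ' τ' - Ik k z ψ τ - DIk k z ψ τ (z' - z) (ψ' - ψ) (τ' - τ)| ≤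
          ε * (nC1 0 h (z' - z) + nC1 (-h) 0 (ψ' - ψ) + |τ' - τ|)) ∧
    (∀ z ψ : ℝ → ℝ, ∀ τ : ℝ, DomIk J I h z ψ τ →
      ∀ ε > 0, ∃ δ > 0, ∀ z' ψ' : ℝ → ℝ, ∀ τ' : ℝ, DomIk J I h z' ψ' τ' →
        nC1 0 h (z' - z) ≤ δ → nC1 (-h) 0 (ψ' - ψ) ≤ δ → |τ' - τ| ≤ δ →
        ∀ u χ : ℝ → ℝ, ∀ s : ℝ, C1on 0 h u → C1on (-h) 0 χ →
          |DIk k z' ψ' τ' u χ s - DIk k z ψ τ u χ s| ≤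
            ε * (nC1 0 h u + nC1 (-h) 0 χ + |s|)) :=
  stmt10_general J I hJ hI h k hk
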